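/- arXiv:2401.08426 — 4 statements merged into one kernel-verified Lean document; each statement's English description precedes it below -/
import Mathlib

section
/- Consider the one-dimensional NDGM recursion β_{t+1} = β_t − αλ·sgn(β_t) with α > 0, λ > 0, sgn(0) = 0, and β₀ not an integer multiple of αλ. Then there exist an integer N₀ ≥ 0 and a real number γ ∈ (0, αλ) such that for all m ≥ 0: β_{N₀+m} = γ when m is even and β_{N₀+m} = γ − αλ when m is odd; i.e., the sequence eventually oscillates with period 2 between γ and γ − αλ. -/
/-- The 1-D NDGM sequence for the toy LASSO loss (with `β₀` not an integer multiple
of `αλ`) eventually oscillates with period 2 between some `γ ∈ (0, αλ)` and `γ - αλ`. -/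
theorem stmt_3 (α lam : ℝ) (hα : 0 < α) (hlam : 0 < lam)
    (β : ℕ → ℝ)
    (hrec : ∀ t, β (t + 1) = β t - α * lam * Real.sign (β t))
    (hinit : ¬ ∃ z : ℤ, β 0 = (z : ℝ) * (α * lam)) :
    ∃ N₀ : ℕ, ∃ γ ∈ Set.Ioo (0 : ℝ) (α * lam),
      ∀ m : ℕ, (Even m → β (N₀ + m) = γ) ∧ (Odd m → β (N₀ + m) = γ - α * lam) := by
  set c := α * lam with hc_def
  have hc : 0 < c := mul_pos hα hlam
  -- invariant: β t is never an integer multiple of c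
  have hnm : ∀ t, ¬ ∃ z : ℤ, β t = (z : ℝ) * c := by
    intro t
    induction t with
    | zero => exact hinit
    | succ t ih =>
      rintro ⟨z, hz⟩
      have hne : β t ≠ 0 := fun h => ih ⟨0, by simp [h]⟩
      rcases lt_or_gt_of_ne hne with h | h
      · rw [hrec t, Real.sign_of_neg h] at hz
        exact ih ⟨z - 1, by push_cast; linarith⟩
      · rw [hrec t, Real.sign_of_pos h] at hz
        exact ih ⟨z + 1, by push_cast; linarith⟩
  have hne0 : ∀ t, β t ≠ 0 := fun t h => hnm t ⟨0, by simp [h]⟩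
  have hnec : ∀ t, β t ≠ c := fun t h => hnm t ⟨1, by simp [h]⟩
  have hnenc : ∀ t, β t ≠ -c := fun t h => hnm t ⟨-1, by simp [h]⟩
  -- eventually reach (0, c)
  have key : ∀ n t, Nat.floor (|β t| / c) = n → ∃ N, β N ∈ Set.Ioo (0:ℝ) c := by
    intro n
    induction n using Nat.strong_induction_on with
    | _ n ih =>
      intro t hfl
      rcases lt_or_gt_of_ne (hne0 t) with h | h
      · rcases lt_or_gt_of_ne (hnenc t) with h2 | h2
        · -- β t < -c : one more step, measure decreases
          have hstep : β (t+1) = β t + c := by rw [hrec t, Real.sign_of_neg h]; ring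
          have hneg : β (t+1) < 0 := by rw [hstep]; linarith
          have habs : |β (t+1)| = |β t| - c := by
            rw [abs_of_neg h, abs_of_neg hneg, hstep]; ring
          have h1 : (1:ℝ) ≤ |β t| / c := by
            rw [le_div_iff₀ hc, one_mul, abs_of_neg h]; linarith
          have hn1 : 1 ≤ n := by
            rw [← hfl]; exact Nat.le_floor (by exact_mod_cast h1)
          have hlt : Nat.floor (|β (t+1)| / c) < n := by
            have : |β (t+1)| / c = |β t| / c - 1 := by
              rw [habs, sub_div, div_self hc.ne']
            rw [this]
            have := Nat.floor_sub_one (|β t| / c)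
            rw [this, hfl]
            omega
          exact ih _ hlt (t+1) rfl
        · -- -c < β t < 0 : next step lands in (0, c)
          refine ⟨t+1, ?_, ?_⟩
          · rw [hrec t, Real.sign_of_neg h]; nlinarith
          · rw [hrec t, Real.sign_of_neg h]; nlinarith
      · rcases lt_or_gt_of_ne (hnec t) with h2 | h2
        · exact ⟨t, h, h2⟩
        · -- β t > c : one more step, measure decreases
          have hstep : β (t+1) = β t - c := by rw [hrec t, Real.sign_of_pos h]; ring
          have hpos : 0 < β (t+1) := by rw [hstep]; linarith
          have habs : |β (t+1)| = |β t| - c := by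
            rw [abs_of_pos h, abs_of_pos hpos, hstep]
          have h1 : (1:ℝ) ≤ |β t| / c := by
            rw [le_div_iff₀ hc, one_mul, abs_of_pos h]; linarith
          have hn1 : 1 ≤ n := by
            rw [← hfl]; exact Nat.le_floor (by exact_mod_cast h1)
          have hlt : Nat.floor (|β (t+1)| / c) < n := by
            have : |β (t+1)| / c = |β t| / c - 1 := by
              rw [habs, sub_div, div_self hc.ne']
            rw [this]
            have := Nat.floor_sub_one (|β t| / c)
            rw [this, hfl]
            omega
          exact ih _ hlt (t+1) rfl
  obtain ⟨N₀, hN₀⟩ := key (Nat.floor (|β 0| / c)) 0 rfl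
  refine ⟨N₀, β N₀, hN₀, ?_⟩
  obtain ⟨hγ0, hγc⟩ := hN₀
  -- period-2 pattern
  have pair : ∀ k : ℕ, β (N₀ + 2*k) = β N₀ ∧ β (N₀ + 2*k + 1) = β N₀ - c := by
    intro k
    induction k with
    | zero =>
      constructor
      · norm_num
      · have := hrec N₀
        rw [Real.sign_of_pos hγ0] at this
        simpa using by rw [show N₀ + 2*0 + 1 = N₀ + 1 by ring, this]; ring
    | succ k ih =>
      obtain ⟨ih1, ih2⟩ := ih
      have hneg : β (N₀ + 2*k + 1) < 0 := by rw [ih2]; linarith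
      have hstep : β (N₀ + 2*k + 2) = β N₀ := by
        have := hrec (N₀ + 2*k + 1)
        rw [Real.sign_of_neg hneg, ih2] at this
        rw [show N₀ + 2*k + 1 + 1 = N₀ + 2*k + 2 by ring] at this
        rw [this]; ring
      constructor
      · rw [show N₀ + 2*(k+1) = N₀ + 2*k + 2 by ring, hstep]
      · have hpos : 0 < β (N₀ + 2*k + 2) := by rw [hstep]; exact hγ0
        have := hrec (N₀ + 2*k + 2)
        rw [Real.sign_of_pos hpos, hstep] at this
        rw [show N₀ + 2*(k+1) + 1 = N₀ + 2*k + 2 + 1 by ring, this]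
        ring
  intro m
  constructor
  · rintro ⟨k, rfl⟩
    have := (pair k).1
    rwa [show N₀ + 2*k = N₀ + (k + k) by ring] at this
  · rintro ⟨k, rfl⟩
    have := (pair k).2
    rwa [show N₀ + 2*k + 1 = N₀ + (2*k + 1) by ring] at this
end

section
/- Fix α > 0 and γ ∈ (0,1), and consider the RMSProp-type recursion β_{t+1} = β_t − (α/√(1 − γ^t))·sgn(β_t) for t ≥ 1, with sgn(0) = 0. Then for every t ≥ 1 with γ^t ≤ 1/2, the update differs from the vanilla NDGM update with penalty 1 by at most α·γ^t: |β_{t+1} − (β_t − α·sgn(β_t))| ≤ α·γ^t. In particular the RMSProp sequence eventually behaves like a vanilla NDGM sequence with LASSO penalty 1 up to an error of order γ^t, irrespective of the penalty λ used in the original LASSO problem. -/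
namespace Real

theorem one_le_inv_sqrt_one_sub {x : ℝ} (hx0 : 0 ≤ x) (hx1 : x < 1) : 1 ≤ (√(1 - x))⁻¹ :=
  (one_le_inv₀ (sqrt_pos.mpr (by linarith))).mpr (sqrt_le_one.mpr (by linarith))

/-- Squaring, this is `(1 + x)² (1 - x) = 1 + x (1 - x - x²) ≥ 1`. -/
theorem inv_sqrt_one_sub_le_one_add {x : ℝ} (hx0 : 0 ≤ x) (hx : x ≤ 1 / 2) :
    (√(1 - x))⁻¹ ≤ 1 + x := by
  have hs : 0 < √(1 - x) := sqrt_pos.mpr (by linarith)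
  have hsq : 1 ≤ ((1 + x) * √(1 - x)) ^ 2 := by
    rw [mul_pow, sq_sqrt (by linarith)]
    nlinarith [mul_nonneg hx0 (by nlinarith : 0 ≤ 1 - x - x ^ 2)]
  have hprod : 1 ≤ (1 + x) * √(1 - x) := by
    nlinarith [mul_nonneg (by linarith : 0 ≤ 1 + x) hs.le]
  rw [inv_le_iff_one_le_mul₀ hs]
  linarith

theorem abs_div_sqrt_one_sub_sub_self_le (c : ℝ) {x : ℝ} (hx0 : 0 ≤ x) (hx : x ≤ 1 / 2) :
    |c / √(1 - x) - c| ≤ |c| * x := by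
  have hinv := one_le_inv_sqrt_one_sub hx0 (by linarith)
  calc |c / √(1 - x) - c| = |c| * ((√(1 - x))⁻¹ - 1) := by
        rw [div_eq_mul_inv, ← mul_sub_one, abs_mul, abs_of_nonneg (sub_nonneg.mpr hinv)]
    _ ≤ |c| * x := by
        gcongr
        linarith [inv_sqrt_one_sub_le_one_add hx0 hx]

theorem abs_mul_sign_le (a r : ℝ) : |a * sign r| ≤ |a| := by
  rw [abs_mul]
  rcases sign_apply_eq r with h | h | h <;> simp [h]

end Real

theorem stmt_10_general (α γ : ℝ) (hα : 0 < α) (hγ0 : 0 < γ)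
    (β : ℕ → ℝ)
    (hrec : ∀ t, 1 ≤ t → β (t + 1) =
      β t - (α / Real.sqrt (1 - γ ^ t)) * Real.sign (β t)) :
    ∀ t : ℕ, 1 ≤ t → γ ^ t ≤ 1 / 2 →
      |β (t + 1) - (β t - α * Real.sign (β t))| ≤ α * γ ^ t := by
  intro t ht hγt
  rw [hrec t ht]
  calc |β t - α / √(1 - γ ^ t) * Real.sign (β t) - (β t - α * Real.sign (β t))|
      = |(α / √(1 - γ ^ t) - α) * Real.sign (β t)| := by rw [← abs_neg]; ring_nf
    _ ≤ |α / √(1 - γ ^ t) - α| := Real.abs_mul_sign_le _ _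
    _ ≤ |α| * γ ^ t := Real.abs_div_sqrt_one_sub_sub_self_le α (by positivity) hγt
    _ = α * γ ^ t := by rw [abs_of_pos hα]

/-- The RMSProp-type recursion `β_{t+1} = β_t - (α/√(1-γ^t))·sgn(β_t)` eventually
behaves like vanilla NDGM with penalty 1: for `t ≥ 1` with `γ^t ≤ 1/2`,
`|β_{t+1} - (β_t - α·sgn(β_t))| ≤ α·γ^t`. -/
theorem stmt_10 (α γ : ℝ) (hα : 0 < α) (hγ0 : 0 < γ) (hγ1 : γ < 1)
    (β : ℕ → ℝ)
    (hrec : ∀ t, 1 ≤ t → β (t + 1) =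
      β t - (α / Real.sqrt (1 - γ ^ t)) * Real.sign (β t)) :
    ∀ t : ℕ, 1 ≤ t → γ ^ t ≤ 1 / 2 →
      |β (t + 1) - (β t - α * Real.sign (β t))| ≤ α * γ ^ t :=
  stmt_10_general α γ hα hγ0 β hrec
end

section
/- Let f : ℝⁿ → ℝ be convex, attaining its global minimum value f* at some point x*, and suppose all subgradients of f are bounded in norm by L (in particular this holds if f is Lipschitz with constant L). Let x : ℕ → ℝⁿ be generated by the subgradient method with constant step size α > 0: x_{k+1} = x_k − α·g_k, where each g_k is a subgradient of f at x_k (so f(y) ≥ f(x_k) + ⟨g_k, y − x_k⟩ for all y, and ‖g_k‖ ≤ L). Then liminf_{k→∞} f(x_k) ≤ f* + α·L² < ∞; in particular the sequence of loss values f(x_k) does not diverge to +∞, i.e., the iteration exhibits unstable convergence for every step size α. -/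
open Filter
open scoped RealInnerProductSpace

/-- Unstable convergence of the constant step-size subgradient method: for a convex
`f` attaining its minimum at `x*` with all subgradients bounded by `L`, the iterates
`x_{k+1} = x_k - α·g_k` satisfy `liminf f(x_k) ≤ f(x*) + α·L²`; in particular the loss
values do not diverge to `+∞`, for every step size `α > 0`. -/
theorem stmt_12 (n : ℕ) (f : EuclideanSpace ℝ (Fin n) → ℝ)
    (hconv : ConvexOn ℝ Set.univ f)
    (xstar : EuclideanSpace ℝ (Fin n)) (hmin : ∀ y, f xstar ≤ f y)
    (L α : ℝ) (hL : 0 ≤ L) (hα : 0 < α)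
    (x g : ℕ → EuclideanSpace ℝ (Fin n))
    (hstep : ∀ k, x (k + 1) = x k - α • g k)
    (hsub : ∀ k, ∀ y, f y ≥ f (x k) + ⟪g k, y - x k⟫)
    (hbound : ∀ k, ‖g k‖ ≤ L) :
    liminf (fun k => f (x k)) atTop ≤ f xstar + α * L ^ 2 ∧
    ¬ Tendsto (fun k => f (x k)) atTop atTop := by
  set c := f xstar + α * L ^ 2 with hc
  have freq : ∀ N : ℕ, ∃ k ≥ N, f (x k) ≤ c := by
    intro N
    rcases eq_or_lt_of_le hL with hL0 | hLpos
    · refine ⟨N, le_refl _, ?_⟩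
      have hg : g N = 0 := norm_le_zero_iff.mp (hL0 ▸ hbound N)
      have h1 := hsub N xstar
      rw [hg] at h1
      simp only [inner_zero_left] at h1
      nlinarith [sq_nonneg L]
    · by_contra hcon
      push_neg at hcon
      set d : ℕ → ℝ := fun k => ‖x k - xstar‖ ^ 2 with hd
      have step : ∀ k, N ≤ k → d (k+1) ≤ d k - α^2 * L^2 := by
        intro k hk
        have hexp : d (k+1) = d k - 2 * (α * ⟪g k, x k - xstar⟫) + α^2 * ‖g k‖^2 := by
          simp only [hd, hstep k]
          have h2 : x k - α • g k - xstar = (x k - xstar) - α • g k := by abel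
          rw [h2, @norm_sub_sq_real, real_inner_smul_right, norm_smul,
            real_inner_comm, mul_pow]
          have : ‖α‖^2 = α^2 := by
            rw [Real.norm_eq_abs, sq_abs]
          rw [this]
        have hinner : f (x k) - f xstar ≤ ⟪g k, x k - xstar⟫ := by
          have h1 := hsub k xstar
          have h3 : ⟪g k, xstar - x k⟫ = - ⟪g k, x k - xstar⟫ := by
            rw [← inner_neg_right]; congr 1; abel
          rw [h3] at h1
          linarith
        have hgk : ‖g k‖^2 ≤ L^2 := by
          have := hbound k
          nlinarith [norm_nonneg (g k)]
        have hfk : c < f (x k) := hcon k hk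
        rw [hexp]
        nlinarith [hα.le]
      have dec : ∀ m : ℕ, d (N + m) ≤ d N - m * (α^2 * L^2) := by
        intro m
        induction m with
        | zero => simp
        | succ p ih =>
          have := step (N + p) (Nat.le_add_right _ _)
          push_cast
          have h4 : N + (p + 1) = (N + p) + 1 := by ring
          rw [h4]
          push_cast at ih ⊢
          linarith
      have hpos : 0 < α^2 * L^2 := by positivity
      obtain ⟨m, hm⟩ := exists_nat_gt (d N / (α^2 * L^2))
      have hm' : d N < m * (α^2 * L^2) := by
        rwa [div_lt_iff₀ hpos] at hm
      have h5 := dec m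
      have h6 : 0 ≤ d (N + m) := by positivity
      linarith
  have hfreq : ∃ᶠ k in atTop, f (x k) ≤ c := frequently_atTop.mpr freq
  have hbdd : IsBoundedUnder (· ≥ ·) atTop (fun k => f (x k)) :=
    ⟨f xstar, eventually_map.mpr (Eventually.of_forall fun k => hmin _)⟩
  constructor
  · exact liminf_le_of_frequently_le hfreq hbdd
  · intro htend
    have hev : ∀ᶠ k in atTop, c < f (x k) := htend.eventually_gt_atTop c
    obtain ⟨k, h1, h2⟩ := (hfreq.and_eventually hev).exists
    linarith
end

section
/- Let Z be an N × P real matrix with rows z_1, …, z_N, let y ∈ ℝ^N satisfy y_i ≤ 0 for all i, and let λ₁ ≥ 0, λ₂ ≥ 0 with λ₁ + λ₂ > 0. Then the penalized single-layer ReLU regression loss L₁(β) = Σ_{i=1}^N (y_i − max(0, ⟨z_i, β⟩))² + λ₁‖β‖₁ + λ₂‖β‖₂² is a convex function of β ∈ ℝ^P, and β = 0 is its unique global minimizer: L₁(β) > L₁(0) = ‖y‖² for every β ≠ 0. -/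
/-!
Each data term is `t ↦ (c - max 0 t)²` with `c ≤ 0` composed with the linear form `⟪zᵢ, ·⟫`.
Expanding, it equals `max(0,t)² - 2c·max(0,t) + c²`: a square of a nonnegative convex function
plus a nonnegative multiple of a convex function, hence convex; the penalties are sums of convex
functions of the coordinates. For the same reason `(c - max 0 t)² ≥ c²`, so the data term is
minimized at `β = 0`, and the penalty is strictly positive off `0` since `λ₁ + λ₂ > 0`.
-/

open scoped RealInnerProductSpace

open Set

section Convexity

variable {E : Type*} [AddCommGroup E] [Module ℝ E] {s : Set E}

theorem ConvexOn.finset_sum {ι : Type*} (t : Finset ι) {f : ι → E → ℝ} (hs : Convex ℝ s)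
    (hf : ∀ i ∈ t, ConvexOn ℝ s (f i)) :
    ConvexOn ℝ s (fun x => ∑ i ∈ t, f i x) := by
  classical
  induction t using Finset.induction_on with
  | empty => simpa using convexOn_const (0 : ℝ) hs
  | insert a t ha ih =>
    simp only [Finset.sum_insert ha]
    exact (hf a (t.mem_insert_self a)).add (ih fun i hi => hf i (t.mem_insert_of_mem hi))

theorem ConvexOn.sq_const_sub {f : E → ℝ} (hf : ConvexOn ℝ s f) (hf₀ : ∀ x ∈ s, 0 ≤ f x)
    {c : ℝ} (hc : c ≤ 0) : ConvexOn ℝ s (fun x => (c - f x) ^ 2) := by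
  have hsq : ConvexOn ℝ s (fun x => f x ^ 2) := hf.pow (fun x hx => hf₀ x hx) 2
  have hlin : ConvexOn ℝ s (fun x => (-2 * c) • f x) := hf.smul (by linarith)
  have hexp : (fun x => (c - f x) ^ 2) = fun x => f x ^ 2 + (-2 * c) • f x + c ^ 2 := by
    funext x
    rw [smul_eq_mul]
    ring
  rw [hexp]
  exact (hsq.add hlin).add (convexOn_const (c ^ 2) hf.1)

theorem convexOn_max_zero_inner {F : Type*} [NormedAddCommGroup F] [InnerProductSpace ℝ F]
    (z : F) : ConvexOn ℝ univ (fun x => max 0 ⟪z, x⟫) :=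
  (convexOn_const 0 convex_univ).sup ((innerₗ F z).convexOn convex_univ)

theorem convexOn_sum_apply {ι : Type*} [Fintype ι] {φ : ℝ → ℝ} (hφ : ConvexOn ℝ univ φ) :
    ConvexOn ℝ univ (fun x : EuclideanSpace ℝ ι => ∑ k, φ (x k)) :=
  ConvexOn.finset_sum _ convex_univ fun k _ =>
    hφ.comp_linearMap (EuclideanSpace.proj (𝕜 := ℝ) k).toLinearMap

theorem convexOn_abs : ConvexOn ℝ univ (fun t : ℝ => |t|) :=
  (convexOn_id convex_univ).sup ((-LinearMap.id).convexOn convex_univ)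

end Convexity

theorem elasticNet_pos {ι : Type*} [Fintype ι] {x : ι → ℝ} (hx : x ≠ 0) {lam1 lam2 : ℝ}
    (hlam1 : 0 ≤ lam1) (hlam2 : 0 ≤ lam2) (hsum : 0 < lam1 + lam2) :
    0 < lam1 * ∑ k, |x k| + lam2 * ∑ k, x k ^ 2 := by
  obtain ⟨k, hk⟩ := Function.ne_iff.mp hx
  have hl1 : 0 < ∑ k, |x k| :=
    Finset.sum_pos' (fun k _ => abs_nonneg _) ⟨k, Finset.mem_univ k, abs_pos.2 hk⟩
  have hl2 : 0 < ∑ k, x k ^ 2 :=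
    Finset.sum_pos' (fun k _ => sq_nonneg _) ⟨k, Finset.mem_univ k, pow_two_pos_of_ne_zero hk⟩
  rcases hlam1.eq_or_lt with rfl | hlam1
  · simp only [zero_add] at hsum ⊢
    positivity
  · positivity

/-- The penalized single-layer ReLU regression loss with non-positive responses,
`L₁(β) = Σᵢ (yᵢ - max(0, ⟪zᵢ, β⟫))² + λ₁‖β‖₁ + λ₂‖β‖₂²` with `λ₁, λ₂ ≥ 0` and
`λ₁ + λ₂ > 0`, is convex and has `β = 0` as its unique global minimizer, with
`L₁(0) = ‖y‖²`. -/
theorem stmt_18 (N P : ℕ)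
    (z : Fin N → EuclideanSpace ℝ (Fin P)) (y : Fin N → ℝ)
    (hy : ∀ i, y i ≤ 0)
    (lam1 lam2 : ℝ) (hlam1 : 0 ≤ lam1) (hlam2 : 0 ≤ lam2) (hsum : 0 < lam1 + lam2)
    (L : EuclideanSpace ℝ (Fin P) → ℝ)
    (hL : ∀ β, L β = ∑ i, (y i - max 0 ⟪z i, β⟫) ^ 2
        + lam1 * ∑ k, |β k| + lam2 * ∑ k, (β k) ^ 2) :
    ConvexOn ℝ Set.univ L ∧
    L 0 = ∑ i, (y i) ^ 2 ∧
    ∀ β : EuclideanSpace ℝ (Fin P), β ≠ 0 → L 0 < L β := by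
  have hL0 : L 0 = ∑ i, y i ^ 2 := by simp [hL]
  refine ⟨?_, hL0, fun β hβ => ?_⟩
  · have hdata := ConvexOn.finset_sum Finset.univ convex_univ fun i _ =>
      (convexOn_max_zero_inner (z i)).sq_const_sub (fun _ _ => le_max_left _ _) (hy i)
    have hl1 := (convexOn_sum_apply (ι := Fin P) convexOn_abs).smul hlam1
    have hl2 := (convexOn_sum_apply (ι := Fin P) (Even.convexOn_pow even_two)).smul hlam2
    rw [show L = _ from funext hL]
    exact (hdata.add hl1).add hl2
  · have hdata : ∑ i, y i ^ 2 ≤ ∑ i, (y i - max 0 ⟪z i, β⟫) ^ 2 :=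
      Finset.sum_le_sum fun i _ => by nlinarith [hy i, le_max_left 0 ⟪z i, β⟫]
    have hpen := elasticNet_pos (x := β.ofLp) (by simpa using hβ) hlam1 hlam2 hsum
    rw [hL0, hL]
    linarith
end
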